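/- arXiv:1611.08222 — 6 statements merged into one kernel-verified Lean document; each statement's English description precedes it below -/
import Mathlib

section
/- Let Z and Π be n×n real positive definite matrices. Let z be a random vector in ℝⁿ distributed according to the multivariate Gaussian measure N(0,Z), and let ξ be a random variable uniformly distributed on [0,1] and independent of z. Then P(ξ ≤ exp(−(1/2) zᵀ Π⁻¹ z)) = det(I + Z Π⁻¹)^{−1/2}. -/
open MeasureTheory Matrix

/-- The multivariate Gaussian measure `N(0, Z)` on `ℝⁿ` with positive definite
covariance matrix `Z`, given by its density with respect to Lebesgue measure. -/
noncomputable def mvGaussian (n : ℕ) (Z : Matrix (Fin n) (Fin n) ℝ) :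
    Measure (Fin n → ℝ) :=
  volume.withDensity fun z => ENNReal.ofReal
    (((2 * Real.pi) ^ (n : ℝ) * Z.det) ^ (-(1 : ℝ) / 2) *
      Real.exp (-(1 / 2) * (z ⬝ᵥ Z⁻¹.mulVec z)))

/-!
Given `z`, the event `ξ ≤ exp(-½ zᵀ Π⁻¹ z)` has probability `exp(-½ zᵀ Π⁻¹ z)`, so the
probability is the `N(0, Z)`-expectation of this function. Multiplied into the density
of `N(0, Z)` it gives an unnormalised Gaussian with precision `M = Z⁻¹ + Π⁻¹`, whose
integral is `√(2π)ⁿ / √(det M)` (substitute `y = M^{1/2} z`).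
Finally `det Z · det M = det (I + Z Π⁻¹)`.
-/

open Set

section QuadraticForm

variable {ι : Type*} [Fintype ι]

theorem continuous_exp_neg_half_dotProduct_mulVec (A : Matrix ι ι ℝ) :
    Continuous fun z : ι → ℝ => Real.exp (-(1 / 2) * (z ⬝ᵥ A *ᵥ z)) :=
  Real.continuous_exp.comp
    (continuous_const.mul
      (continuous_id.dotProduct (continuous_const.matrix_mulVec continuous_id)))

theorem lintegral_exp_neg_half_dotProduct_self :
    ∫⁻ y : ι → ℝ, ENNReal.ofReal (Real.exp (-(1 / 2) * (y ⬝ᵥ y))) =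
      ENNReal.ofReal (√(2 * Real.pi) ^ Fintype.card ι) := by
  have hprod : ∀ y : ι → ℝ,
      Real.exp (-(1 / 2) * (y ⬝ᵥ y)) = ∏ i, Real.exp (-(1 / 2) * y i ^ 2) := by
    intro y
    rw [← Real.exp_sum, dotProduct, Finset.mul_sum]
    simp only [sq]
  have hint : Integrable fun y : ι → ℝ => ∏ i, Real.exp (-(1 / 2) * y i ^ 2) :=
    Integrable.fintype_prod (f := fun _ x => Real.exp (-(1 / 2) * x ^ 2))
      fun _ => integrable_exp_neg_mul_sq (by norm_num)
  simp only [hprod]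
  rw [← ofReal_integral_eq_lintegral_ofReal hint
    (.of_forall fun y => Finset.prod_nonneg fun i _ => (Real.exp_pos _).le), volume_pi,
    integral_fintype_prod_eq_pow (fun x : ℝ => Real.exp (-(1 / 2) * x ^ 2)), integral_gaussian]
  norm_num [mul_comm]

variable [DecidableEq ι]

theorem lintegral_comp_mulVec {S : Matrix ι ι ℝ} (hS : S.det ≠ 0) {f : (ι → ℝ) → ENNReal}
    (hf : Measurable f) :
    ∫⁻ y, f (S *ᵥ y) = ENNReal.ofReal |S.det|⁻¹ * ∫⁻ y, f y := by
  rw [← smul_eq_mul, ← lintegral_smul_measure, ← abs_inv,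
    ← Real.map_matrix_volume_pi_eq_smul_volume_pi hS,
    lintegral_map hf (toLin' S).continuous_of_finiteDimensional.measurable]
  rfl

open scoped MatrixOrder in
theorem lintegral_exp_neg_half_dotProduct_mulVec {M : Matrix ι ι ℝ} (hM : M.PosDef) :
    ∫⁻ z : ι → ℝ, ENNReal.ofReal (Real.exp (-(1 / 2) * (z ⬝ᵥ M *ᵥ z))) =
      ENNReal.ofReal (√(2 * Real.pi) ^ Fintype.card ι / √M.det) := by
  set S := CFC.sqrt M
  have hSS : S * S = M := CFC.sqrt_mul_sqrt_self M hM.posSemidef.nonneg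
  have hS_symm : Sᵀ = S := (CFC.sqrt_nonneg M).posSemidef.isHermitian
  have hdetS : S.det = √M.det := by simpa using hM.posSemidef.det_sqrt
  have hdetS_pos : 0 < S.det := hdetS ▸ Real.sqrt_pos.2 hM.det_pos
  have hquad : ∀ z : ι → ℝ, z ⬝ᵥ M *ᵥ z = S *ᵥ z ⬝ᵥ S *ᵥ z := fun z => by
    rw [← hSS, ← mulVec_mulVec, dotProduct_mulVec, ← mulVec_transpose, hS_symm]
  have hstd : Measurable fun y : ι → ℝ =>
      ENNReal.ofReal (Real.exp (-(1 / 2) * (y ⬝ᵥ y))) := by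
    simpa using
      (continuous_exp_neg_half_dotProduct_mulVec (1 : Matrix ι ι ℝ)).measurable.ennreal_ofReal
  simp only [hquad]
  rw [lintegral_comp_mulVec hdetS_pos.ne' hstd, lintegral_exp_neg_half_dotProduct_self,
    ← ENNReal.ofReal_mul (by positivity), abs_of_pos hdetS_pos, hdetS, inv_mul_eq_div]

end QuadraticForm

theorem prod_restrict_Icc_setOf_snd_le {α : Type*} [MeasurableSpace α] (μ : Measure α)
    {f : α → ℝ} (hf : Measurable f) (hf_le : ∀ x, f x ≤ 1) :
    (μ.prod (volume.restrict (Icc (0 : ℝ) 1))) {p | p.2 ≤ f p.1} =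
      ∫⁻ x, ENNReal.ofReal (f x) ∂μ := by
  have hmeas : MeasurableSet {p : α × ℝ | p.2 ≤ f p.1} :=
    measurableSet_le measurable_snd (hf.comp measurable_fst)
  rw [Measure.prod_apply hmeas]
  refine lintegral_congr fun x => ?_
  have hslice : Prod.mk x ⁻¹' {p : α × ℝ | p.2 ≤ f p.1} ∩ Icc 0 1 = Icc 0 (f x) := by
    ext t
    simp only [mem_inter_iff, mem_preimage, mem_Icc]
    constructor
    · rintro ⟨hle, h0, -⟩; exact ⟨h0, hle⟩
    · rintro ⟨h0, hle⟩; exact ⟨hle, h0, hle.trans (hf_le x)⟩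
  rw [Measure.restrict_apply' measurableSet_Icc, hslice, Real.volume_Icc, sub_zero]

theorem rpow_neg_half_mul_sqrt_pow_div_sqrt {c a b : ℝ} (hc : 0 < c) (ha : 0 < a) (hb : 0 < b)
    (n : ℕ) : (c ^ (n : ℝ) * a) ^ (-(1 : ℝ) / 2) * (√c ^ n / √b) = (a * b) ^ (-(1 : ℝ) / 2) := by
  have hsqrt : ∀ x : ℝ, 0 ≤ x → x ^ (-(1 : ℝ) / 2) = (√x)⁻¹ := fun x hx => by
    rw [neg_div, Real.rpow_neg hx, Real.sqrt_eq_rpow]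
  have hsqrt_pow : √(c ^ (n : ℝ)) = √c ^ n := by
    rw [Real.sqrt_eq_rpow, Real.sqrt_eq_rpow, ← Real.rpow_mul hc.le, mul_comm (n : ℝ),
      Real.rpow_mul hc.le, Real.rpow_natCast]
  rw [hsqrt _ (by positivity), hsqrt _ (by positivity), Real.sqrt_mul (by positivity),
    Real.sqrt_mul ha.le, hsqrt_pow]
  have : 0 < √a := Real.sqrt_pos.2 ha
  have : 0 < √b := Real.sqrt_pos.2 hb
  have : 0 < √c := Real.sqrt_pos.2 hc
  field_simp

theorem lintegral_exp_neg_half_dotProduct_mulVec_mvGaussian {n : ℕ}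
    {Z P : Matrix (Fin n) (Fin n) ℝ} (hZ : Z.PosDef) (hP : P.PosSemidef) :
    ∫⁻ z, ENNReal.ofReal (Real.exp (-(1 / 2) * (z ⬝ᵥ P *ᵥ z))) ∂mvGaussian n Z =
      ENNReal.ofReal ((1 + Z * P).det ^ (-(1 : ℝ) / 2)) := by
  set C : ℝ := ((2 * Real.pi) ^ (n : ℝ) * Z.det) ^ (-(1 : ℝ) / 2)
  set M := Z⁻¹ + P
  have hM : M.PosDef := hZ.inv.add_posSemidef hP
  have hC : 0 < C := by have := hZ.det_pos; positivity
  have hdensity_meas : Measurable fun z : Fin n → ℝ =>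
      ENNReal.ofReal (C * Real.exp (-(1 / 2) * (z ⬝ᵥ Z⁻¹ *ᵥ z))) :=
    (continuous_const.mul (continuous_exp_neg_half_dotProduct_mulVec _)).measurable.ennreal_ofReal
  have hdensity_mul : ∀ z : Fin n → ℝ,
      ENNReal.ofReal (C * Real.exp (-(1 / 2) * (z ⬝ᵥ Z⁻¹ *ᵥ z))) *
          ENNReal.ofReal (Real.exp (-(1 / 2) * (z ⬝ᵥ P *ᵥ z))) =
        ENNReal.ofReal C * ENNReal.ofReal (Real.exp (-(1 / 2) * (z ⬝ᵥ M *ᵥ z))) := fun z => by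
    rw [← ENNReal.ofReal_mul (by positivity), ← ENNReal.ofReal_mul hC.le, mul_assoc,
      ← Real.exp_add, add_mulVec, dotProduct_add, mul_add]
  have hdet : (1 + Z * P).det = Z.det * M.det := by
    rw [← det_mul, mul_add, mul_nonsing_inv _ hZ.det_pos.ne'.isUnit]
  rw [mvGaussian, lintegral_withDensity_eq_lintegral_mul _ hdensity_meas
    (continuous_exp_neg_half_dotProduct_mulVec P).measurable.ennreal_ofReal]
  simp only [Pi.mul_apply, hdensity_mul]
  rw [lintegral_const_mul _
      (continuous_exp_neg_half_dotProduct_mulVec M).measurable.ennreal_ofReal,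
    lintegral_exp_neg_half_dotProduct_mulVec hM, ← ENNReal.ofReal_mul hC.le, Fintype.card_fin,
    hdet]
  exact congrArg ENNReal.ofReal
    (rpow_neg_half_mul_sqrt_pow_div_sqrt Real.two_pi_pos hZ.det_pos hM.det_pos n)

/-- **Lemma 2(i)**: if `z ∼ N(0, Z)` and `ξ ∼ U[0,1]` are independent, then
`P(ξ ≤ exp(-½ zᵀ Π⁻¹ z)) = det(I + Z Π⁻¹)^{-1/2}`. -/
theorem gaussian_event_trigger_prob (n : ℕ) (Z Pm : Matrix (Fin n) (Fin n) ℝ)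
    (hZ : Z.PosDef) (hPm : Pm.PosDef) :
    ((mvGaussian n Z).prod (volume.restrict (Set.Icc (0 : ℝ) 1)))
      {p : (Fin n → ℝ) × ℝ | p.2 ≤ Real.exp (-(1 / 2) * (p.1 ⬝ᵥ (Pm⁻¹).mulVec p.1))}
      = ENNReal.ofReal ((1 + Z * Pm⁻¹).det ^ (-(1 : ℝ) / 2)) := by
  have hPinv : Pm⁻¹.PosSemidef := hPm.inv.posSemidef
  rw [prod_restrict_Icc_setOf_snd_le _
      (continuous_exp_neg_half_dotProduct_mulVec Pm⁻¹).measurable fun z => ?_,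
    lintegral_exp_neg_half_dotProduct_mulVec_mvGaussian hZ hPinv]
  have hquad : 0 ≤ z ⬝ᵥ Pm⁻¹ *ᵥ z := by simpa using hPinv.dotProduct_mulVec_nonneg z
  exact Real.exp_le_one_iff.2 (by linarith)
end

section
/- Let Z and Π be n×n real positive definite matrices. Let z be a random vector in ℝⁿ distributed according to the multivariate Gaussian measure N(0,Z), and let ξ be uniformly distributed on [0,1] and independent of z. Then for every Borel set S ⊆ ℝⁿ, P(z ∈ S and ξ ≤ exp(−(1/2) zᵀ Π⁻¹ z)) = det(I + Z Π⁻¹)^{−1/2} · N(0, (Z⁻¹ + Π⁻¹)⁻¹)(S). In other words, conditioned on the event {ξ ≤ exp(−(1/2) zᵀ Π⁻¹ z)}, the random vector z is distributed as N(0, (Z⁻¹ + Π⁻¹)⁻¹). -/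
/-!
Conditioning on `ξ ≤ g(z)` with `ξ` uniform on `[0,1]` is rejection sampling: the joint
probability is the `N(0, Z)`-integral of `g` over `S`. With `g(z) = exp(-½ zᵀ Π⁻¹ z)` the
Gaussian exponents add, giving the density of `N(0, (Z⁻¹ + Π⁻¹)⁻¹)`, and the normalizing
constants differ by `det(I + Z Π⁻¹)^{-1/2}` since `I + Z Π⁻¹ = Z (Z⁻¹ + Π⁻¹)`.
-/

open MeasureTheory Matrix

open Set

theorem volume_restrict_Icc_zero_one_Iic {t : ℝ} (ht : t ≤ 1) :
    volume.restrict (Icc (0 : ℝ) 1) (Iic t) = ENNReal.ofReal t := by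
  rw [Measure.restrict_apply measurableSet_Iic, inter_comm, ← Ici_inter_Iic, inter_assoc,
    Iic_inter_Iic, min_eq_right ht, Ici_inter_Iic, Real.volume_Icc, sub_zero]

theorem prod_restrict_Icc_setOf_le_eq_withDensity {α : Type*} [MeasurableSpace α]
    (μ : Measure α) {g : α → ℝ} (hg : Measurable g) (hg_le : ∀ x, g x ≤ 1)
    {S : Set α} (hS : MeasurableSet S) :
    (μ.prod (volume.restrict (Icc (0 : ℝ) 1))) {p | p.1 ∈ S ∧ p.2 ≤ g p.1} =
      μ.withDensity (fun x => ENNReal.ofReal (g x)) S := by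
  have hmeas : MeasurableSet {p : α × ℝ | p.1 ∈ S ∧ p.2 ≤ g p.1} :=
    (measurable_fst hS).inter (measurableSet_le measurable_snd (hg.comp measurable_fst))
  rw [Measure.prod_apply hmeas, withDensity_apply _ hS, ← lintegral_indicator hS]
  refine lintegral_congr fun x => ?_
  by_cases hx : x ∈ S
  · have hslice : Prod.mk x ⁻¹' {p : α × ℝ | p.1 ∈ S ∧ p.2 ≤ g p.1} = Iic (g x) := by
      ext; simp [hx]
    rw [hslice, indicator_of_mem hx, volume_restrict_Icc_zero_one_Iic (hg_le x)]
  · simp [hx]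

theorem exp_neg_half_dotProduct_mulVec_le_one {n : Type*} [Fintype n] {B : Matrix n n ℝ}
    (hB : B.PosSemidef) (z : n → ℝ) : Real.exp (-(1 / 2) * (z ⬝ᵥ B *ᵥ z)) ≤ 1 := by
  have hquad : 0 ≤ z ⬝ᵥ B *ᵥ z := by simpa using hB.dotProduct_mulVec_nonneg z
  exact Real.exp_le_one_iff.mpr (by linarith)

theorem exp_neg_half_dotProduct_mulVec_add {n : Type*} [Fintype n] (A B : Matrix n n ℝ)
    (z : n → ℝ) :
    Real.exp (-(1 / 2) * (z ⬝ᵥ A *ᵥ z)) * Real.exp (-(1 / 2) * (z ⬝ᵥ B *ᵥ z)) =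
      Real.exp (-(1 / 2) * (z ⬝ᵥ (A + B) *ᵥ z)) := by
  rw [← Real.exp_add, add_mulVec, dotProduct_add, mul_add]

theorem det_one_add_mul_eq_det_mul_det_inv_add {n : Type*} [Fintype n] [DecidableEq n]
    {Z : Matrix n n ℝ} (hZ : IsUnit Z.det) (B : Matrix n n ℝ) :
    (1 + Z * B).det = Z.det * (Z⁻¹ + B).det := by
  rw [← det_mul, mul_add, mul_nonsing_inv _ hZ]

theorem rpow_mul_eq_rpow_mul_mul_rpow_mul_inv {t a b : ℝ} (ht : 0 ≤ t) (ha : 0 ≤ a)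
    (hb : 0 < b) (r : ℝ) : (t * a) ^ r = (a * b) ^ r * (t * b⁻¹) ^ r := by
  rw [← Real.mul_rpow (by positivity) (by positivity)]
  congr 1
  field_simp

theorem mvGaussian_withDensity_exp_neg_half_quad {n : ℕ} {Z B : Matrix (Fin n) (Fin n) ℝ}
    (hZ : Z.PosDef) (hB : B.PosSemidef) :
    (mvGaussian n Z).withDensity
        (fun z => ENNReal.ofReal (Real.exp (-(1 / 2) * (z ⬝ᵥ B *ᵥ z)))) =
      ENNReal.ofReal ((1 + Z * B).det ^ (-(1 : ℝ) / 2)) • mvGaussian n ((Z⁻¹ + B)⁻¹) := by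
  have hW : (Z⁻¹ + B).PosDef := hZ.inv.add_posSemidef hB
  have hdet : (1 + Z * B).det = Z.det * (Z⁻¹ + B).det :=
    det_one_add_mul_eq_det_mul_det_inv_add (isUnit_iff_ne_zero.mpr hZ.det_pos.ne') B
  have hdet_nonneg : 0 ≤ (1 + Z * B).det := hdet ▸ (mul_pos hZ.det_pos hW.det_pos).le
  rw [mvGaussian, mvGaussian, ← withDensity_mul _ (by fun_prop) (by fun_prop),
    ← withDensity_smul _ (by fun_prop)]
  congr 1
  funext z
  simp only [Pi.mul_apply, Pi.smul_apply, smul_eq_mul]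
  rw [← ENNReal.ofReal_mul' (Real.exp_pos _).le,
    ← ENNReal.ofReal_mul (Real.rpow_nonneg hdet_nonneg _)]
  congr 1
  rw [nonsing_inv_nonsing_inv _ (isUnit_iff_ne_zero.mpr hW.det_pos.ne'), hdet, det_nonsing_inv,
    Ring.inverse_eq_inv', rpow_mul_eq_rpow_mul_mul_rpow_mul_inv (by positivity) hZ.det_pos.le
      hW.det_pos, ← exp_neg_half_dotProduct_mulVec_add]
  ring

/-- **Lemma 2(ii)**: if `z ∼ N(0, Z)` and `ξ ∼ U[0,1]` are independent, then for every
Borel set `S ⊆ ℝⁿ`,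
`P(z ∈ S ∧ ξ ≤ exp(-½ zᵀ Π⁻¹ z)) = det(I + Z Π⁻¹)^{-1/2} ⬝ N(0, (Z⁻¹ + Π⁻¹)⁻¹)(S)`,
i.e. conditioned on the triggering event, `z ∼ N(0, (Z⁻¹ + Π⁻¹)⁻¹)`. -/
theorem gaussian_event_trigger_conditional (n : ℕ) (Z Pm : Matrix (Fin n) (Fin n) ℝ)
    (hZ : Z.PosDef) (hPm : Pm.PosDef) :
    ∀ S : Set (Fin n → ℝ), MeasurableSet S →
      ((mvGaussian n Z).prod (volume.restrict (Set.Icc (0 : ℝ) 1)))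
        {p : (Fin n → ℝ) × ℝ |
          p.1 ∈ S ∧ p.2 ≤ Real.exp (-(1 / 2) * (p.1 ⬝ᵥ (Pm⁻¹).mulVec p.1))}
        = ENNReal.ofReal ((1 + Z * Pm⁻¹).det ^ (-(1 : ℝ) / 2)) *
            mvGaussian n ((Z⁻¹ + Pm⁻¹)⁻¹) S := by
  intro S hS
  have hPm_inv : Pm⁻¹.PosSemidef := hPm.inv.posSemidef
  rw [prod_restrict_Icc_setOf_le_eq_withDensity
      (g := fun z => Real.exp (-(1 / 2) * (z ⬝ᵥ Pm⁻¹ *ᵥ z))) _ (by fun_prop)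
      (exp_neg_half_dotProduct_mulVec_le_one hPm_inv) hS,
    mvGaussian_withDensity_exp_neg_half_quad hZ hPm_inv, Measure.smul_apply, smul_eq_mul]
end

section
/- Let Σ be an n×n real positive definite matrix and let α > 0. Let ε be a random vector in ℝⁿ distributed according to the multivariate Gaussian measure N(0,Σ), and let ξ be uniformly distributed on [0,1] and independent of ε. Then P(ξ ≤ exp(−(1/2) εᵀ (αΣ)⁻¹ ε)) = (α/(1+α))^{n/2}, and for every Borel set S ⊆ ℝⁿ, P(ε ∈ S and ξ ≤ exp(−(1/2) εᵀ (αΣ)⁻¹ ε)) = (α/(1+α))^{n/2} · N(0, (α/(1+α)) Σ)(S); that is, conditioned on this event, ε is distributed as N(0, (α/(1+α)) Σ). -/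
/-!
Given `ε`, the event `ξ ≤ e(ε)` with `e(x) = exp(-½ xᵀ(αΣ)⁻¹x) ∈ (0, 1]` has probability `e(ε)`,
so by Fubini the event reweights `N(0, Σ)` by the density `e`. Since `Σ⁻¹ + (αΣ)⁻¹ = (κΣ)⁻¹` with
`κ = α/(1+α)`, and `det(κΣ) = κⁿ det Σ`, the reweighted density is `κ^{n/2}` times the density of
`N(0, κΣ)`. The latter has total mass one: writing `Z⁻¹ = BᵀB`, the substitution `y = Bx` reduces
its integral to a product of one-dimensional Gaussian integrals.
-/

open MeasureTheory Matrix

open Real Set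
open scoped ENNReal MatrixOrder

lemma sqrt_pow_of_nonneg {x : ℝ} (hx : 0 ≤ x) (n : ℕ) : √(x ^ n) = √x ^ n := by
  rw [sqrt_eq_iff_mul_self_eq (by positivity) (by positivity), ← mul_pow, mul_self_sqrt hx]

lemma rpow_natCast_mul_rpow_neg_half {a d : ℝ} (ha : 0 ≤ a) (hd : 0 ≤ d) (n : ℕ) :
    (a ^ (n : ℝ) * d) ^ (-(1 : ℝ) / 2) = (√a ^ n * √d)⁻¹ := by
  rw [neg_div, rpow_neg (by positivity), rpow_natCast, ← sqrt_eq_rpow, sqrt_mul (by positivity),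
    sqrt_pow_of_nonneg ha]

lemma dotProduct_smul_inv_mulVec {ι K : Type*} [Fintype ι] [DecidableEq ι] [Field K]
    {M : Matrix ι ι K} (hM : IsUnit M.det) {c : K} (hc : c ≠ 0) (x : ι → K) :
    x ⬝ᵥ (c • M)⁻¹ *ᵥ x = c⁻¹ * (x ⬝ᵥ M⁻¹ *ᵥ x) := by
  let := invertibleOfNonzero hc
  rw [inv_smul M c hM, invOf_eq_inv, smul_mulVec, dotProduct_smul, smul_eq_mul]

section GaussianIntegral

variable {ι : Type*} [Fintype ι]

lemma exp_neg_half_dotProduct_self (y : ι → ℝ) :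
    exp (-(1 / 2) * (y ⬝ᵥ y)) = ∏ i, exp (-(1 / 2) * y i ^ 2) := by
  simp only [dotProduct, Finset.mul_sum, ← exp_sum, sq]

lemma integrable_exp_neg_half_dotProduct_self :
    Integrable fun y : ι → ℝ => exp (-(1 / 2) * (y ⬝ᵥ y)) := by
  simp only [exp_neg_half_dotProduct_self]
  exact Integrable.fintype_prod fun _ => integrable_exp_neg_mul_sq (by norm_num)

lemma integral_exp_neg_half_dotProduct_self :
    ∫ y : ι → ℝ, exp (-(1 / 2) * (y ⬝ᵥ y)) = √(2 * π) ^ Fintype.card ι := by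
  simp only [exp_neg_half_dotProduct_self]
  rw [integral_fintype_prod_volume_eq_pow (fun t : ℝ => exp (-(1 / 2) * t ^ 2)),
    integral_gaussian]
  norm_num [mul_comm]

lemma lintegral_exp_neg_half_dotProduct_mulVec_s2 [DecidableEq ι] {A : Matrix ι ι ℝ}
    (hA : A.PosDef) :
    ∫⁻ x, ENNReal.ofReal (exp (-(1 / 2) * (x ⬝ᵥ A *ᵥ x)))
      = ENNReal.ofReal (√(2 * π) ^ Fintype.card ι / √A.det) := by
  obtain ⟨B, rfl⟩ := CStarAlgebra.nonneg_iff_eq_star_mul_self.mp hA.posSemidef.nonneg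
  have hdet : (star B * B).det = B.det ^ 2 := by
    rw [star_eq_conjTranspose, det_mul, det_conjTranspose, star_trivial, sq]
  have hB : B.det ≠ 0 := fun h => hA.det_pos.ne' (by rw [hdet, h, sq, mul_zero])
  have hquad (x : ι → ℝ) : x ⬝ᵥ (star B * B) *ᵥ x = toLin' B x ⬝ᵥ toLin' B x := by
    rw [toLin'_apply, ← mulVec_mulVec, dotProduct_mulVec, star_eq_conjTranspose,
      conjTranspose_eq_transpose_of_trivial, vecMul_transpose]
  simp_rw [hquad]
  rw [← lintegral_map (f := fun y => ENNReal.ofReal (exp (-(1 / 2) * (y ⬝ᵥ y)))) (by fun_prop)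
      (LinearMap.continuous_on_pi _).measurable,
    map_matrix_volume_pi_eq_smul_volume_pi hB, lintegral_smul_measure,
    ← ofReal_integral_eq_lintegral_ofReal integrable_exp_neg_half_dotProduct_self
      (Filter.Eventually.of_forall fun _ => (exp_pos _).le),
    integral_exp_neg_half_dotProduct_self, smul_eq_mul, ← ENNReal.ofReal_mul (abs_nonneg _),
    hdet, sqrt_sq_eq_abs, abs_inv, div_eq_inv_mul]

end GaussianIntegral

lemma prod_restrict_Icc_setOf_le {X : Type*} [MeasurableSpace X] (μ : Measure X) [SFinite μ]
    {f : X → ℝ} (hf : Measurable f) (hf_le : ∀ x, f x ≤ 1) {S : Set X} (hS : MeasurableSet S) :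
    (μ.prod (volume.restrict (Icc (0 : ℝ) 1))) {p | p.1 ∈ S ∧ p.2 ≤ f p.1}
      = μ.withDensity (fun x => ENNReal.ofReal (f x)) S := by
  have hA : MeasurableSet {p : X × ℝ | p.1 ∈ S ∧ p.2 ≤ f p.1} :=
    (measurable_fst hS).inter (measurableSet_le measurable_snd (hf.comp measurable_fst))
  have hslice (x : X) : volume.restrict (Icc (0 : ℝ) 1) {t | x ∈ S ∧ t ≤ f x}
      = S.indicator (fun x => ENNReal.ofReal (f x)) x := by
    by_cases hx : x ∈ S
    · have hIcc : Iic (f x) ∩ Icc 0 1 = Icc 0 (f x) := by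
        ext t
        simp only [mem_inter_iff, mem_Iic, mem_Icc]
        constructor
        · rintro ⟨h, h0, -⟩; exact ⟨h0, h⟩
        · rintro ⟨h0, h⟩; exact ⟨h, h0, h.trans (hf_le x)⟩
      simp only [hx, true_and, indicator_of_mem]
      change volume.restrict _ (Iic (f x)) = _
      rw [Measure.restrict_apply measurableSet_Iic, hIcc, Real.volume_Icc, sub_zero]
    · simp [hx]
  rw [Measure.prod_apply hA, withDensity_apply _ hS, ← lintegral_indicator hS]
  exact lintegral_congr hslice

noncomputable def mvGaussianPDF (n : ℕ) (Z : Matrix (Fin n) (Fin n) ℝ) (z : Fin n → ℝ) : ℝ :=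
  ((2 * π) ^ (n : ℝ) * Z.det) ^ (-(1 : ℝ) / 2) * exp (-(1 / 2) * (z ⬝ᵥ Z⁻¹ *ᵥ z))

section mvGaussian

variable {n : ℕ} {Z : Matrix (Fin n) (Fin n) ℝ}

instance (n : ℕ) (Z : Matrix (Fin n) (Fin n) ℝ) : SFinite (mvGaussian n Z) := by
  unfold mvGaussian
  infer_instance

lemma mvGaussian_eq_withDensity (n : ℕ) (Z : Matrix (Fin n) (Fin n) ℝ) :
    mvGaussian n Z = volume.withDensity fun z => ENNReal.ofReal (mvGaussianPDF n Z z) :=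
  rfl

lemma continuous_mvGaussianPDF (n : ℕ) (Z : Matrix (Fin n) (Fin n) ℝ) :
    Continuous (mvGaussianPDF n Z) := by
  unfold mvGaussianPDF
  fun_prop

lemma mvGaussianPDF_nonneg (hZ : Z.PosDef) (x : Fin n → ℝ) : 0 ≤ mvGaussianPDF n Z x :=
  mul_nonneg (rpow_nonneg (by have := hZ.det_pos; positivity) _) (exp_pos _).le

lemma isProbabilityMeasure_mvGaussian (hZ : Z.PosDef) :
    IsProbabilityMeasure (mvGaussian n Z) := by
  have hdet := hZ.det_pos
  have hC : 0 ≤ ((2 * π) ^ (n : ℝ) * Z.det) ^ (-(1 : ℝ) / 2) := rpow_nonneg (by positivity) _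
  constructor
  rw [mvGaussian_eq_withDensity, withDensity_apply _ MeasurableSet.univ, Measure.restrict_univ]
  simp only [mvGaussianPDF, ENNReal.ofReal_mul hC]
  rw [lintegral_const_mul _ (by fun_prop), lintegral_exp_neg_half_dotProduct_mulVec_s2 hZ.inv,
    ← ENNReal.ofReal_mul hC, rpow_natCast_mul_rpow_neg_half (by positivity) hdet.le,
    det_nonsing_inv, Ring.inverse_eq_inv', sqrt_inv, Fintype.card_fin, div_inv_eq_mul,
    inv_mul_cancel₀ (by positivity), ENNReal.ofReal_one]

lemma mvGaussianPDF_mul_exp (hZ : Z.PosDef) {α : ℝ} (hα : 0 < α) (x : Fin n → ℝ) :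
    mvGaussianPDF n Z x * exp (-(1 / 2) * (x ⬝ᵥ (α • Z)⁻¹ *ᵥ x))
      = (α / (1 + α)) ^ ((n : ℝ) / 2) * mvGaussianPDF n ((α / (1 + α)) • Z) x := by
  have hκ : 0 < α / (1 + α) := by positivity
  have hdet := hZ.det_pos
  have hunit : IsUnit Z.det := hdet.ne'.isUnit
  unfold mvGaussianPDF
  rw [dotProduct_smul_inv_mulVec hunit hα.ne', dotProduct_smul_inv_mulVec hunit hκ.ne', det_smul,
    Fintype.card_fin, rpow_natCast_mul_rpow_neg_half (by positivity) hdet.le,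
    rpow_natCast_mul_rpow_neg_half (by positivity) (by positivity), sqrt_mul (pow_nonneg hκ.le n),
    sqrt_pow_of_nonneg hκ.le, rpow_div_two_eq_sqrt _ hκ.le, rpow_natCast]
  set q := x ⬝ᵥ Z⁻¹ *ᵥ x
  have hexp : exp (-(1 / 2) * q) * exp (-(1 / 2) * (α⁻¹ * q))
      = exp (-(1 / 2) * ((α / (1 + α))⁻¹ * q)) := by
    rw [← exp_add]
    congr 1
    field_simp
    ring
  have : 0 < √(α / (1 + α)) := sqrt_pos.2 hκ
  have : 0 < √Z.det := sqrt_pos.2 hdet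
  have : 0 < √(2 * π) := sqrt_pos.2 (by positivity)
  rw [← hexp]
  field_simp

lemma withDensity_exp_mvGaussian (hZ : Z.PosDef) {α : ℝ} (hα : 0 < α) :
    (mvGaussian n Z).withDensity (fun x => ENNReal.ofReal (exp (-(1 / 2) * (x ⬝ᵥ (α • Z)⁻¹ *ᵥ x))))
      = ENNReal.ofReal ((α / (1 + α)) ^ ((n : ℝ) / 2)) • mvGaussian n ((α / (1 + α)) • Z) := by
  rw [mvGaussian_eq_withDensity, mvGaussian_eq_withDensity,
    ← withDensity_mul _ (continuous_mvGaussianPDF n Z).measurable.ennreal_ofReal (by fun_prop),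
    ← withDensity_smul _ (continuous_mvGaussianPDF n _).measurable.ennreal_ofReal]
  congr 1
  funext x
  simp only [Pi.mul_apply, Pi.smul_apply, smul_eq_mul]
  rw [← ENNReal.ofReal_mul (mvGaussianPDF_nonneg hZ x), mvGaussianPDF_mul_exp hZ hα,
    ENNReal.ofReal_mul (rpow_nonneg (by positivity) _)]

end mvGaussian

/-- The special case `Π = αΣ` of the stochastic event-triggering rule: if
`ε ∼ N(0, Σ)` and `ξ ∼ U[0,1]` are independent, then
`P(ξ ≤ exp(-½ εᵀ (αΣ)⁻¹ ε)) = (α/(1+α))^{n/2}`, and conditioned on this event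
`ε ∼ N(0, (α/(1+α)) Σ)`. -/
theorem gaussian_event_trigger_special (n : ℕ) (Sig : Matrix (Fin n) (Fin n) ℝ)
    (hSig : Sig.PosDef) (α : ℝ) (hα : 0 < α) :
    ((mvGaussian n Sig).prod (volume.restrict (Set.Icc (0 : ℝ) 1)))
        {p : (Fin n → ℝ) × ℝ |
          p.2 ≤ Real.exp (-(1 / 2) * (p.1 ⬝ᵥ ((α • Sig)⁻¹).mulVec p.1))}
        = ENNReal.ofReal ((α / (1 + α)) ^ ((n : ℝ) / 2)) ∧
      ∀ S : Set (Fin n → ℝ), MeasurableSet S →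
        ((mvGaussian n Sig).prod (volume.restrict (Set.Icc (0 : ℝ) 1)))
          {p : (Fin n → ℝ) × ℝ |
            p.1 ∈ S ∧ p.2 ≤ Real.exp (-(1 / 2) * (p.1 ⬝ᵥ ((α • Sig)⁻¹).mulVec p.1))}
          = ENNReal.ofReal ((α / (1 + α)) ^ ((n : ℝ) / 2)) *
              mvGaussian n ((α / (1 + α)) • Sig) S := by
  have hle_one (x : Fin n → ℝ) : exp (-(1 / 2) * (x ⬝ᵥ (α • Sig)⁻¹ *ᵥ x)) ≤ 1 := by
    have := (hSig.smul hα).inv.posSemidef.dotProduct_mulVec_nonneg x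
    rw [star_trivial] at this
    exact exp_le_one_iff.2 (by nlinarith)
  have hevent (S : Set (Fin n → ℝ)) (hS : MeasurableSet S) :
      ((mvGaussian n Sig).prod (volume.restrict (Icc (0 : ℝ) 1)))
          {p | p.1 ∈ S ∧ p.2 ≤ exp (-(1 / 2) * (p.1 ⬝ᵥ (α • Sig)⁻¹ *ᵥ p.1))}
        = ENNReal.ofReal ((α / (1 + α)) ^ ((n : ℝ) / 2)) *
            mvGaussian n ((α / (1 + α)) • Sig) S := by
    rw [prod_restrict_Icc_setOf_le _ (by fun_prop) hle_one hS, withDensity_exp_mvGaussian hSig hα,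
      Measure.smul_apply, smul_eq_mul]
  refine ⟨?_, hevent⟩
  have := isProbabilityMeasure_mvGaussian (n := n) (hSig.smul (by positivity : 0 < α / (1 + α)))
  simpa using hevent univ MeasurableSet.univ
end

section
/- Let A be an n×n real matrix, let Q be an n×n positive semidefinite matrix, and define h(X) := A X Aᵀ + Q on n×n symmetric matrices. Let P be a positive semidefinite matrix satisfying P ⪯ h(P) in the Loewner order. Let X = Σ_{j∈F} κ_j h^{j}(P) be a finite convex combination of iterates of h applied to P (κ_j ≥ 0, Σ_{j∈F} κ_j = 1), and let α ≥ 0. Define t(X,α) := (1/(1+α)) P + (α/(1+α)) h(X). Then P ⪯ t(X,α) ⪯ h(X); in particular Tr(P) ≤ Tr(t(X,α)) ≤ Tr(h(X)). -/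
/-!
Everything is monotonicity in the Loewner order. Since `h` is a congruence `X ↦ A X Aᵀ` plus a
constant, it is monotone, so `P ⪯ h(P)` propagates to `P ⪯ h^j(P)` for every `j`. The set
`{Y | P ⪯ Y}` is convex, hence contains `X`, and then `P ⪯ h(P) ⪯ h(X)`. Finally `t(X, α)` is a
convex combination of `P` and `h(X)`, so it lies in the order interval between them, and the
trace is monotone.
-/

open Matrix

/-- The Lyapunov-type operator `h(X) = A X Aᵀ + Q` on `n × n` matrices. -/
def hOp {n : ℕ} (A Q X : Matrix (Fin n) (Fin n) ℝ) : Matrix (Fin n) (Fin n) ℝ :=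
  A * X * Aᵀ + Q

open scoped MatrixOrder ComplexOrder

theorem Matrix.trace_le_trace {𝕜 m : Type*} [RCLike 𝕜] [Fintype m] {A B : Matrix m m 𝕜}
    (h : A ≤ B) : A.trace ≤ B.trace :=
  sub_nonneg.mp <| trace_sub B A ▸ (le_iff.mp h).trace_nonneg

theorem hOp_monotone {n : ℕ} (A Q : Matrix (Fin n) (Fin n) ℝ) : Monotone (hOp A Q) :=
  fun _ _ h => add_le_add_left (star_right_conjugate_le_conjugate h A) Q

theorem le_iterate_hOp {n : ℕ} {A Q P : Matrix (Fin n) (Fin n) ℝ} (hPh : P ≤ hOp A Q P)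
    (j : ℕ) : P ≤ (hOp A Q)^[j] P :=
  (hOp_monotone A Q).monotone_iterate_of_le_map hPh j.zero_le

theorem event_update_sandwich_general {n : ℕ} (A Q P : Matrix (Fin n) (Fin n) ℝ)
    (hPh : (hOp A Q P - P).PosSemidef)
    (F : Finset ℕ) (κ : ℕ → ℝ) (hκ : ∀ j ∈ F, 0 ≤ κ j) (hsum : ∑ j ∈ F, κ j = 1)
    (X : Matrix (Fin n) (Fin n) ℝ) (hX : X = ∑ j ∈ F, κ j • (hOp A Q)^[j] P)
    (α : ℝ) (hα : 0 ≤ α) :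
    ((1 / (1 + α)) • P + (α / (1 + α)) • hOp A Q X - P).PosSemidef ∧
    (hOp A Q X - ((1 / (1 + α)) • P + (α / (1 + α)) • hOp A Q X)).PosSemidef ∧
    P.trace ≤ ((1 / (1 + α)) • P + (α / (1 + α)) • hOp A Q X).trace ∧
    ((1 / (1 + α)) • P + (α / (1 + α)) • hOp A Q X).trace ≤ (hOp A Q X).trace := by
  -- `Matrix.le_iff` is `Iff.rfl`: each `(B - A).PosSemidef` here is literally `A ≤ B`.
  have hPX : P ≤ X := hX ▸ (convex_Ici P).sum_mem hκ hsum fun j _ => le_iterate_hOp hPh j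
  have hPhX : P ≤ hOp A Q X := le_trans hPh (hOp_monotone A Q hPX)
  have hweights : 1 / (1 + α) + α / (1 + α) = 1 := by field_simp
  obtain ⟨hlow, hhigh⟩ := segment_subset_Icc hPhX
    ⟨1 / (1 + α), α / (1 + α), by positivity, by positivity, hweights, rfl⟩
  exact ⟨hlow, hhigh, trace_le_trace hlow, trace_le_trace hhigh⟩

/-- **Lemma 3(iii)**: if `Q ⪰ 0`, `P ⪰ 0`, `P ⪯ h(P)`, and `X` is a finite convex
combination of the iterates `h^{j}(P)`, then for any `α ≥ 0` the event-based update
`t(X, α) = (1/(1+α)) P + (α/(1+α)) h(X)` satisfies `P ⪯ t(X, α) ⪯ h(X)`; in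
particular `Tr(P) ≤ Tr(t(X, α)) ≤ Tr(h(X))`. -/
theorem event_update_sandwich {n : ℕ} (A Q P : Matrix (Fin n) (Fin n) ℝ)
    (hQ : Q.PosSemidef) (hP : P.PosSemidef)
    (hPh : (hOp A Q P - P).PosSemidef)
    (F : Finset ℕ) (κ : ℕ → ℝ) (hκ : ∀ j ∈ F, 0 ≤ κ j) (hsum : ∑ j ∈ F, κ j = 1)
    (X : Matrix (Fin n) (Fin n) ℝ) (hX : X = ∑ j ∈ F, κ j • (hOp A Q)^[j] P)
    (α : ℝ) (hα : 0 ≤ α) :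
    ((1 / (1 + α)) • P + (α / (1 + α)) • hOp A Q X - P).PosSemidef ∧
    (hOp A Q X - ((1 / (1 + α)) • P + (α / (1 + α)) • hOp A Q X)).PosSemidef ∧
    P.trace ≤ ((1 / (1 + α)) • P + (α / (1 + α)) • hOp A Q X).trace ∧
    ((1 / (1 + α)) • P + (α / (1 + α)) • hOp A Q X).trace ≤ (hOp A Q X).trace :=
  event_update_sandwich_general A Q P hPh F κ hκ hsum X hX α hα
end

section
/- Let ℓ > 0 and λ > 0 be real numbers. The function f(α) := α^{ℓ/2}(α − λ) attains its minimum over [0,1] uniquely at α* = min(ℓλ/(ℓ+2), 1); that is, f(α*) ≤ f(α) for all α ∈ [0,1], with strict inequality for α ≠ α*. -/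
/-! On `(0, ∞)` the function `x ↦ x ^ p * (x - a)` has derivative `x ^ (p - 1) ((p + 1) x - p a)`,
which changes sign only at `c = p a / (p + 1)`. So the function strictly decreases up to `c` and
strictly increases after it, and its unique minimiser on `[0, 1]` is `min c 1`; for `p = ℓ / 2`
this is `ℓ λ / (ℓ + 2)`. -/

open Set

theorem lt_apply_of_strictAntiOn_of_strictMonoOn {α β : Type*} [LinearOrder α] [Preorder β]
    {f : α → β} {a b m x : α} (hanti : StrictAntiOn f (Icc a m))
    (hmono : StrictMonoOn f (Icc m b)) (hx : x ∈ Icc a b) (hxm : x ≠ m) : f m < f x := by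
  rcases hxm.lt_or_gt with hlt | hgt
  · exact hanti ⟨hx.1, hlt.le⟩ ⟨hx.1.trans hlt.le, le_rfl⟩ hlt
  · exact hmono ⟨le_rfl, hgt.le.trans hx.2⟩ ⟨hgt.le, hx.2⟩ hgt

namespace Real

theorem hasDerivAt_rpow_mul_sub (p a : ℝ) {x : ℝ} (hx : 0 < x) :
    HasDerivAt (fun y : ℝ => y ^ p * (y - a)) (x ^ (p - 1) * ((p + 1) * x - p * a)) x := by
  have hpow : x ^ p = x ^ (p - 1) * x := by
    rw [← rpow_add_one hx.ne', sub_add_cancel]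
  refine ((hasDerivAt_rpow_const (Or.inl hx.ne')).mul ((hasDerivAt_id x).sub_const a)).congr_deriv
    ?_
  rw [hpow, id]
  ring

theorem continuous_rpow_mul_sub {p : ℝ} (hp : 0 ≤ p) (a : ℝ) :
    Continuous (fun y : ℝ => y ^ p * (y - a)) :=
  (continuous_rpow_const hp).mul (continuous_id.sub continuous_const)

theorem strictAntiOn_rpow_mul_sub {p : ℝ} (hp : 0 ≤ p) (a : ℝ) :
    StrictAntiOn (fun y : ℝ => y ^ p * (y - a)) (Icc 0 (p * a / (p + 1))) := by
  refine strictAntiOn_of_deriv_neg (convex_Icc _ _) (continuous_rpow_mul_sub hp a).continuousOn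
    fun x hx => ?_
  rw [interior_Icc] at hx
  rw [(hasDerivAt_rpow_mul_sub p a hx.1).deriv]
  have hxc := (lt_div_iff₀ (by linarith)).mp hx.2
  exact mul_neg_of_pos_of_neg (rpow_pos_of_pos hx.1 _) (by linarith)

theorem strictMonoOn_rpow_mul_sub {p a : ℝ} (hp : 0 ≤ p) (ha : 0 ≤ a) :
    StrictMonoOn (fun y : ℝ => y ^ p * (y - a)) (Ici (p * a / (p + 1))) := by
  refine strictMonoOn_of_deriv_pos (convex_Ici _) (continuous_rpow_mul_sub hp a).continuousOn
    fun x hx => ?_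
  rw [interior_Ici, mem_Ioi] at hx
  have hx0 : 0 < x := lt_of_le_of_lt (by positivity) hx
  rw [(hasDerivAt_rpow_mul_sub p a hx0).deriv]
  have hcx := (div_lt_iff₀ (by linarith)).mp hx
  exact mul_pos (rpow_pos_of_pos hx0 _) (by linarith)

theorem rpow_mul_sub_min_lt {p a x : ℝ} (hp : 0 ≤ p) (ha : 0 ≤ a) (hx : x ∈ Icc 0 1)
    (hxm : x ≠ min (p * a / (p + 1)) 1) :
    min (p * a / (p + 1)) 1 ^ p * (min (p * a / (p + 1)) 1 - a) < x ^ p * (x - a) := by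
  refine lt_apply_of_strictAntiOn_of_strictMonoOn (f := fun y : ℝ => y ^ p * (y - a))
    ((strictAntiOn_rpow_mul_sub hp a).mono (Icc_subset_Icc_right (min_le_left _ _)))
    ?_ hx hxm
  rcases le_total (p * a / (p + 1)) 1 with hc | hc
  · rw [min_eq_left hc]
    exact (strictMonoOn_rpow_mul_sub hp ha).mono Icc_subset_Ici_self
  · rw [min_eq_right hc]
    exact (subsingleton_Icc_of_ge le_rfl).strictMonoOn _

end Real

/-- For `ℓ > 0` and `λ > 0`, the function `f(α) = α^{ℓ/2} (α - λ)` attains its minimum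
over `[0, 1]` uniquely at `α* = min(ℓλ/(ℓ+2), 1)`. -/
theorem last_pair_cost_minimizer (ℓ lam : ℝ) (hℓ : 0 < ℓ) (hlam : 0 < lam) :
    ∀ α ∈ Set.Icc (0 : ℝ) 1,
      (min (ℓ * lam / (ℓ + 2)) 1) ^ (ℓ / 2) * (min (ℓ * lam / (ℓ + 2)) 1 - lam)
          ≤ α ^ (ℓ / 2) * (α - lam) ∧
      (α ≠ min (ℓ * lam / (ℓ + 2)) 1 →
        (min (ℓ * lam / (ℓ + 2)) 1) ^ (ℓ / 2) * (min (ℓ * lam / (ℓ + 2)) 1 - lam)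
          < α ^ (ℓ / 2) * (α - lam)) := by
  intro α hα
  have hcrit : ℓ * lam / (ℓ + 2) = ℓ / 2 * lam / (ℓ / 2 + 1) := by
    field_simp
  have hlt : α ≠ min (ℓ * lam / (ℓ + 2)) 1 →
      (min (ℓ * lam / (ℓ + 2)) 1) ^ (ℓ / 2) * (min (ℓ * lam / (ℓ + 2)) 1 - lam)
        < α ^ (ℓ / 2) * (α - lam) := by
    rw [hcrit]
    exact Real.rpow_mul_sub_min_lt (by positivity) hlam.le hα
  refine ⟨?_, hlt⟩
  rcases eq_or_ne α (min (ℓ * lam / (ℓ + 2)) 1) with rfl | hne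
  · exact le_rfl
  · exact (hlt hne).le
end

section
/- Let ℓ > 0, λ > 0, c > 0 be real numbers and let x > 0 satisfy (ℓ+2) x^{(ℓ+4)/2} − (ℓ/λ) x^{(ℓ+2)/2} − (2/λ) c^{(ℓ+2)/ℓ} = 0. Then λ c^{(ℓ+2)/ℓ} − λ x^{(ℓ+2)/2} + x^{ℓ/2} − c^{(ℓ+2)/ℓ} x^{−1} = ((ℓ+2)/2) x^{ℓ/2} (λ x − 1)². In particular this quantity is nonnegative. -/
/-- If `x > 0` satisfies `(ℓ+2) x^{(ℓ+4)/2} - (ℓ/λ) x^{(ℓ+2)/2} - (2/λ) c^{(ℓ+2)/ℓ} = 0`,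
then the saturated cost gap satisfies the perfect-square identity
`λ c^{(ℓ+2)/ℓ} - λ x^{(ℓ+2)/2} + x^{ℓ/2} - c^{(ℓ+2)/ℓ} x⁻¹ = ((ℓ+2)/2) x^{ℓ/2} (λx - 1)²`,
and in particular this quantity is nonnegative. -/
theorem saturated_gap_square_identity (ℓ lam c x : ℝ) (hℓ : 0 < ℓ) (hlam : 0 < lam)
    (hc : 0 < c) (hx : 0 < x)
    (hroot : (ℓ + 2) * x ^ ((ℓ + 4) / 2) - (ℓ / lam) * x ^ ((ℓ + 2) / 2)
        - (2 / lam) * c ^ ((ℓ + 2) / ℓ) = 0) :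
    lam * c ^ ((ℓ + 2) / ℓ) - lam * x ^ ((ℓ + 2) / 2) + x ^ (ℓ / 2)
        - c ^ ((ℓ + 2) / ℓ) * x⁻¹
      = ((ℓ + 2) / 2) * x ^ (ℓ / 2) * (lam * x - 1) ^ 2 ∧
    0 ≤ lam * c ^ ((ℓ + 2) / ℓ) - lam * x ^ ((ℓ + 2) / 2) + x ^ (ℓ / 2)
        - c ^ ((ℓ + 2) / ℓ) * x⁻¹ := by
  have h1 : x ^ ((ℓ + 2) / 2) = x ^ (ℓ / 2) * x := by
    rw [show (ℓ + 2) / 2 = ℓ / 2 + 1 by ring, Real.rpow_add hx, Real.rpow_one]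
  have h2 : x ^ ((ℓ + 4) / 2) = x ^ (ℓ / 2) * x * x := by
    rw [show (ℓ + 4) / 2 = ℓ / 2 + 1 + 1 by ring, Real.rpow_add hx, Real.rpow_add hx,
      Real.rpow_one]
  have hP : 0 < x ^ (ℓ / 2) := Real.rpow_pos_of_pos hx _
  set P := x ^ (ℓ / 2)
  set A := c ^ ((ℓ + 2) / ℓ)
  rw [h2] at hroot
  rw [h1] at hroot ⊢
  have hA : 2 * A = lam * (ℓ + 2) * P * x * x - ℓ * P * x := by
    field_simp at hroot
    linarith [hroot]
  have key : lam * A - lam * (P * x) + P - A * x⁻¹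
      = ((ℓ + 2) / 2) * P * (lam * x - 1) ^ 2 := by
    field_simp
    linear_combination (lam * x - 1) * hA
  refine ⟨key, key ▸ ?_⟩
  positivity
end
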